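/- If S is a model complete first-order theory and S and T have the same universal consequences (S_∀ = T_∀), then S is a model companion of T. -/

import Mathlib

open FirstOrder FirstOrder.Language

universe u v

variable {L : FirstOrder.Language.{u, v}}

/-- A formula is *universal* if it has the form `∀ ȳ, χ` with `χ` quantifier-free. -/
def IsUniversalFormula {α : Type*} (φ : L.Formula α) : Prop :=
  ∃ (n : ℕ) (χ : L.BoundedFormula α n), χ.IsQF ∧ φ = χ.alls

/-- A formula is *existential* if it has the form `∃ ȳ, χ` with `χ` quantifier-free. -/
def IsExistentialFormula {α : Type*} (φ : L.Formula α) : Prop :=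
  ∃ (n : ℕ) (χ : L.BoundedFormula α n), χ.IsQF ∧ φ = χ.exs

/-- A theory is *model complete* if every embedding between models of it is elementary. -/
def IsModelComplete (T : L.Theory) : Prop :=
  ∀ (M N : Type (max u v)) [L.Structure M] [L.Structure N] [Nonempty M] [Nonempty N],
    M ⊨ T → N ⊨ T → ∀ (f : M ↪[L] N) (n : ℕ) (φ : L.Formula (Fin n)) (x : Fin n → M),
      φ.Realize (f ∘ x) ↔ φ.Realize x

/-- `M` is *existentially closed in `N` via* the embedding `f` if every existential formula
with parameters from `M` that holds in `N` (of the images) already holds in `M`. -/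
def IsECVia {M N : Type (max u v)} [L.Structure M] [L.Structure N] (f : M ↪[L] N) : Prop :=
  ∀ (k : ℕ) (φ : L.Formula (Fin k)), IsExistentialFormula φ →
    ∀ x : Fin k → M, φ.Realize (f ∘ x) → φ.Realize x

/-- `M` is *existentially closed for* the theory `T` if `M ⊨ T` and `M` is existentially
closed in every model of `T` via every embedding. -/
def IsECFor (T : L.Theory) (M : Type (max u v)) [L.Structure M] [Nonempty M] : Prop :=
  M ⊨ T ∧ ∀ (N : Type (max u v)) [L.Structure N] [Nonempty N], N ⊨ T →
    ∀ f : M ↪[L] N, IsECVia f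

/-- `T_∀` : the set of universal sentences that are logical consequences of `T`. -/
def universalPart (T : L.Theory) : L.Theory :=
  {φ : L.Sentence | IsUniversalFormula φ ∧ T ⊨ᵇ φ}

/-- `Tstar` is a *model companion* of `T`: `Tstar` is model complete, every model of `T`
embeds into a model of `Tstar`, and every model of `Tstar` embeds into a model of `T`. -/
def IsModelCompanion (T Tstar : L.Theory) : Prop :=
  IsModelComplete Tstar ∧
  (∀ (M : Type (max u v)) [L.Structure M] [Nonempty M], M ⊨ T →
     ∃ (N : Type (max u v)) (_ : L.Structure N) (_ : Nonempty N),
       N ⊨ Tstar ∧ Nonempty (M ↪[L] N)) ∧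
  (∀ (M : Type (max u v)) [L.Structure M] [Nonempty M], M ⊨ Tstar →
     ∃ (N : Type (max u v)) (_ : L.Structure N) (_ : Nonempty N),
       N ⊨ T ∧ Nonempty (M ↪[L] N))

/-!
A model of `T_∀` embeds into a model of `T`: otherwise, by compactness, `T` proves the negation
of some quantifier-free formula true of finitely many elements of `M`, and the universal closure
of that negation lies in `T_∀`, so it holds in `M`. When `S_∀ = T_∀`, every model of either
theory is a model of this common universal part, hence embeds into a model of the other.
-/

universe w

namespace FirstOrder.Language

open BoundedFormula Term

namespace BoundedFormula

theorem IsQF.restrictFreeVar {α β : Type*} [DecidableEq α] {n : ℕ} {φ : L.BoundedFormula α n}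
    (h : φ.IsQF) (f : φ.freeVarFinset → β) : (φ.restrictFreeVar f).IsQF := by
  induction h with
  | falsum => exact IsQF.falsum
  | of_isAtomic h => cases h with
    | equal => exact (IsAtomic.equal _ _).isQF
    | rel => exact (IsAtomic.rel _ _).isQF
  | imp _ _ ih₁ ih₂ => exact (ih₁ _).imp (ih₂ _)

theorem IsQF.foldr_inf {α : Type*} {n : ℕ} {l : List (L.BoundedFormula α n)}
    (h : ∀ φ ∈ l, φ.IsQF) : (l.foldr (· ⊓ ·) ⊤).IsQF := by
  induction l with
  | nil => exact IsQF.top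
  | cons φ l ih => exact (h φ List.mem_cons_self).inf (ih fun ψ hψ => h ψ (.tail φ hψ))

theorem IsQF.iInf {α β : Type*} [Finite β] {n : ℕ} {f : β → L.BoundedFormula α n}
    (h : ∀ b, (f b).IsQF) : (BoundedFormula.iInf f).IsQF :=
  IsQF.foldr_inf fun _ hφ => by
    obtain ⟨b, -, rfl⟩ := List.mem_map.1 hφ
    exact h b

end BoundedFormula

namespace Formula

/-- The universal closure of `φ`; it quantifies only over the free variables that occur, which
are finitely many even when `α` is infinite. -/
noncomputable def allClosure {α : Type*} [DecidableEq α] (φ : L.Formula α) : L.Sentence :=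
  iAlls φ.freeVarFinset (Formula.relabel Sum.inr (φ.restrictFreeVar id))

theorem realize_allClosure {α : Type*} [DecidableEq α] {φ : L.Formula α} {M : Type*}
    [L.Structure M] [Nonempty M] : φ.allClosure.Realize M ↔ ∀ v : α → M, φ.Realize v := by
  simp only [allClosure, Sentence.Realize, realize_iAlls, realize_relabel]
  refine ⟨fun h v => (realize_restrictFreeVar (f := id) v fun _ => rfl).1 (h fun a => v a),
    fun h i => ?_⟩
  let v : α → M := Function.extend Subtype.val i fun _ => Classical.arbitrary M
  exact (realize_restrictFreeVar (f := id) v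
    fun a => (Subtype.val_injective.extend_apply _ _ a).symm).2 (h v)

theorem isUniversalFormula_allClosure {α : Type*} [DecidableEq α] {φ : L.Formula α}
    (h : φ.IsQF) : IsUniversalFormula φ.allClosure :=
  ⟨_, _, ((h.restrictFreeVar id).relabel _).relabel _, rfl⟩

end Formula

theorem allClosure_mem_universalPart {α : Type*} [DecidableEq α] {T : L.Theory}
    {φ : L.Formula α} (hφ : φ.IsQF) (hT : T ⊨ᵇ φ) : φ.allClosure ∈ universalPart T :=
  ⟨Formula.isUniversalFormula_allClosure hφ, Theory.models_sentence_iff.2 fun M =>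
    Formula.realize_allClosure.2 fun _ => hT.realize_formula M⟩

theorem model_universalPart (T : L.Theory) (M : Type*) [L.Structure M] [Nonempty M] [M ⊨ T] :
    M ⊨ universalPart T :=
  (Theory.model_iff _).2 fun _ hσ => hσ.2.realize_sentence M

/-- Reflection of quantifier-free formulas comes from applying `hf` to negations. -/
def Embedding.ofRealizeQF {M N : Type*} [L.Structure M] [L.Structure N] (f : M → N)
    (hf : ∀ φ : L.Formula M, φ.IsQF → φ.Realize id → φ.Realize f) : M ↪[L] N where
  toFun := f
  inj' a b hab := by
    by_contra hne
    have hne' := hf (Term.equal (var a) (var b)).not (IsAtomic.equal _ _).isQF.not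
      (by simpa using hne)
    simp only [Formula.realize_not, Formula.realize_equal, realize_var] at hne'
    exact hne' hab
  map_fun' F x := by
    simpa [Function.comp_def, eq_comm] using
      hf (Term.equal (func F fun i => var (x i)) (var (Structure.funMap F x)))
        (IsAtomic.equal _ _).isQF (by simp)
  map_rel' r x := by
    have hr := hf (r.formula fun i => var (x i)) (IsAtomic.rel _ _).isQF
    have hnr := hf (r.formula fun i => var (x i)).not (IsAtomic.rel _ _).isQF.not
    simp only [Formula.realize_not, Formula.realize_rel, Term.realize_var, id] at hr hnr
    exact ⟨fun h => by_contra fun hn => hnr hn h, hr⟩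

variable (L) in
def qfDiagram (M : Type*) [L.Structure M] : Set (L.Formula M) :=
  {φ | φ.IsQF ∧ φ.Realize id}

section Diagram

variable (T : L.Theory) (M : Type w) [L.Structure M] [Nonempty M] [M ⊨ universalPart T]

theorem isSatisfiable_onTheory_union_equivSentence_of_subset_qfDiagram
    {s : Finset (L.Formula M)} (hs : ↑s ⊆ L.qfDiagram M) :
    ((L.lhomWithConstants M).onTheory T ∪
      Formula.equivSentence '' (s : Set (L.Formula M))).IsSatisfiable := by
  classical
  let χ : L.Formula M := Formula.iInf fun φ : s => (φ : L.Formula M)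
  have hχ : ¬T ⊨ᵇ χ.not := fun hT =>
    Formula.realize_allClosure.1 (Theory.realize_sentence_of_mem _
      (allClosure_mem_universalPart (IsQF.iInf fun φ => (hs φ.2).1).not hT)) id
      (Formula.realize_iInf.2 fun φ => (hs φ.2).2)
  rw [Theory.models_formula_iff_onTheory_models_equivSentence, Theory.models_iff_not_satisfiable,
    not_not] at hχ
  obtain ⟨N⟩ := hχ
  let : L.Structure N := (L.lhomWithConstants M).reduct N
  have hχN : N ⊨ (Formula.equivSentence χ.not).not :=
    N.is_model.realize_of_mem _ (Set.mem_union_right _ (Set.mem_singleton _))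
  simp only [Sentence.realize_not, Formula.realize_equivSentence, Formula.realize_not, not_not,
    χ, Formula.realize_iInf] at hχN
  have : N ⊨ (L.lhomWithConstants M).onTheory T ∪
      Formula.equivSentence '' (s : Set (L.Formula M)) := by
    refine (N.is_model.mono Set.subset_union_left).union ((Theory.model_iff _).2 ?_)
    rintro _ ⟨φ, hφ, rfl⟩
    exact (Formula.realize_equivSentence N φ).2 (hχN ⟨φ, hφ⟩)
  exact Theory.Model.isSatisfiable N

theorem isSatisfiable_onTheory_union_equivSentence_qfDiagram :
    ((L.lhomWithConstants M).onTheory T ∪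
      Formula.equivSentence '' L.qfDiagram M).IsSatisfiable := by
  classical
  refine Theory.isSatisfiable_iff_isFinitelySatisfiable.2 fun T₀ hT₀ => ?_
  obtain ⟨T₁, T₂, rfl, hT₁, hT₂⟩ := Finset.subset_union_elim hT₀
  obtain ⟨s, hs, rfl⟩ := Finset.subset_set_image_iff.1 (hT₂.trans Set.sdiff_subset)
  refine (isSatisfiable_onTheory_union_equivSentence_of_subset_qfDiagram T M hs).mono ?_
  rw [Finset.coe_union, Finset.coe_image]
  exact Set.union_subset_union hT₁ subset_rfl

theorem exists_model_embedding_of_model_universalPart :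
    ∃ (N : Type (max u v w)) (_ : L.Structure N) (_ : Nonempty N),
      N ⊨ T ∧ Nonempty (M ↪[L] N) := by
  obtain ⟨N⟩ := isSatisfiable_onTheory_union_equivSentence_qfDiagram T M
  let : L.Structure N := (L.lhomWithConstants M).reduct N
  have hD : N ⊨ Formula.equivSentence '' L.qfDiagram M := N.is_model.mono Set.subset_union_right
  have hT : N ⊨ T := (LHom.onTheory_model _ _).1 (N.is_model.mono Set.subset_union_left)
  refine ⟨N, _, inferInstance, hT, ⟨Embedding.ofRealizeQF (fun m => (L.con m : N)) ?_⟩⟩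
  intro φ hφ hφM
  exact (Formula.realize_equivSentence N φ).1 (hD.realize_of_mem _ ⟨φ, ⟨hφ, hφM⟩, rfl⟩)

end Diagram

end FirstOrder.Language

/-- A model complete theory with the same universal consequences as `T` is a model
companion of `T`. -/
theorem isModelCompanion_of_modelComplete_of_universalPart_eq (S T : L.Theory)
    (hS : IsModelComplete S) (h : universalPart S = universalPart T) :
    IsModelCompanion T S := by
  refine ⟨hS, fun M _ _ hM => ?_, fun M _ _ hM => ?_⟩
  · have : M ⊨ universalPart S := h ▸ model_universalPart T M
    exact exists_model_embedding_of_model_universalPart S M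
  · have : M ⊨ universalPart T := h ▸ model_universalPart S M
    exact exists_model_embedding_of_model_universalPart T M
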